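/- arXiv:2508.01714 — 2 statements merged into one kernel-verified Lean document; each statement's English description precedes it below -/
import Mathlib

section
/- Let F be a field and for i ∈ Fin n let C_i, R_i be 8×8 matrices over F with R_i C_i = I₈. Fix a permutation π of Fin n, scalars θ_i, ρ_j, β_{i,j}, γ_{i,j}, K_i, α_i, α'_i, x_i ∈ F with ∑_i K_i = 0. Define the token row vector t_{i,j} = (ρ_j, 0, 0, β_{i,j}, γ_{i,j}, 0, θ_i·δ_{j,π(i)}, 0) · R_i and the ciphertext column vector c_i = C_i · (K_i, α_i, α'_i, 0, 0, 0, x_i, 0)ᵀ. Then for every j, ∑_{i} t_{i,j} · c_i = θ_{π⁻¹(j)} · x_{π⁻¹(j)}. -/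
open Matrix

theorem routing_correctness (F : Type*) [Field F] (n : ℕ)
    (π : Equiv.Perm (Fin n))
    (C R : Fin n → Matrix (Fin 8) (Fin 8) F)
    (hRC : ∀ i, R i * C i = 1)
    (θ : Fin n → F) (ρ : Fin n → F) (β γ : Fin n → Fin n → F)
    (K α α' x : Fin n → F) (hK : ∑ i, K i = 0) :
    ∀ j : Fin n,
      ∑ i, (Matrix.vecMul
          ![ρ j, 0, 0, β i j, γ i j, 0, θ i * (if j = π i then 1 else 0), 0]
          (R i)) ⬝ᵥ
        (Matrix.mulVec (C i) ![K i, α i, α' i, 0, 0, 0, x i, 0])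
      = θ (π.symm j) * x (π.symm j) := by
  intro j
  have key : ∀ i : Fin n,
      (Matrix.vecMul ![ρ j, 0, 0, β i j, γ i j, 0, θ i * (if j = π i then 1 else 0), 0] (R i)) ⬝ᵥ
        (Matrix.mulVec (C i) ![K i, α i, α' i, 0, 0, 0, x i, 0])
      = ρ j * K i + (if i = π.symm j then θ i * x i else 0) := by
    intro i
    rw [← Matrix.dotProduct_mulVec, Matrix.mulVec_mulVec, hRC, Matrix.one_mulVec]
    have hiff : (j = π i) ↔ (i = π.symm j) := by
      constructor <;> intro h <;> simp [h]
    simp [Matrix.cons_dotProduct, Matrix.vecHead, Matrix.vecTail, hiff]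
  simp only [key, Finset.sum_add_distrib, ← Finset.mul_sum, hK, mul_zero,
    Finset.sum_ite_eq' Finset.univ (π.symm j), Finset.mem_univ, if_true, zero_add]
end

section
/- Let F be a field and fix a permutation π of Fin n, units θ_i ∈ Fˣ, and scalars ρ_{ℓ+1}, ξ_i ∈ Fˣ, K_i, x_i ∈ F. Define modified tokens t'_i = (0,0,0,0,0,ξ_i,0,0)·R_i and modified ciphertexts c'_i = C_i·(K_i, α_i, α'_i, 0, 0, ξ_i⁻¹·(ρ_{ℓ+1}·K_i + θ_i·δ_{ℓ+1,π(i)}·x_i), x_i, y_i)ᵀ, where R_i C_i = I₈. Then t'_i · c'_i = ρ_{ℓ+1}·K_i + θ_i·δ_{ℓ+1,π(i)}·x_i, which equals the inner product of the original token (ρ_{ℓ+1}, 0, 0, β_{i,ℓ+1}, γ_{i,ℓ+1}, ξ_i, θ_i·δ_{ℓ+1,π(i)}, 0)·R_i with the original ciphertext C_i·(K_i, α_i, α'_i, 0, 0, 0, x_i, 0)ᵀ. -/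
open Matrix

theorem modified_token_ciphertext_equivalence (F : Type*) [Field F] (n : ℕ)
    (π : Equiv.Perm (Fin n)) (ℓ : Fin n)
    (θ ξ : Fin n → Fˣ) (ρ : F)
    (C R : Fin n → Matrix (Fin 8) (Fin 8) F)
    (hRC : ∀ i, R i * C i = 1)
    (K x y α α' β γ : Fin n → F) :
    ∀ i : Fin n,
      (Matrix.vecMul ![0, 0, 0, 0, 0, (ξ i : F), 0, 0] (R i)) ⬝ᵥ
        (Matrix.mulVec (C i)
          ![K i, α i, α' i, 0, 0,
            ((ξ i : F))⁻¹ * (ρ * K i + (θ i : F) * (if ℓ = π i then 1 else 0) * x i),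
            x i, y i])
      = ρ * K i + (θ i : F) * (if ℓ = π i then 1 else 0) * x i ∧
      (Matrix.vecMul ![0, 0, 0, 0, 0, (ξ i : F), 0, 0] (R i)) ⬝ᵥ
        (Matrix.mulVec (C i)
          ![K i, α i, α' i, 0, 0,
            ((ξ i : F))⁻¹ * (ρ * K i + (θ i : F) * (if ℓ = π i then 1 else 0) * x i),
            x i, y i])
      = (Matrix.vecMul
          ![ρ, 0, 0, β i, γ i, (ξ i : F),
            (θ i : F) * (if ℓ = π i then 1 else 0), 0] (R i)) ⬝ᵥ
        (Matrix.mulVec (C i) ![K i, α i, α' i, 0, 0, 0, x i, 0]) := by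
  intro i
  have key : ∀ v w : Fin 8 → F,
      (Matrix.vecMul v (R i)) ⬝ᵥ (Matrix.mulVec (C i) w) = v ⬝ᵥ w := by
    intro v w
    rw [← Matrix.dotProduct_mulVec, Matrix.mulVec_mulVec, hRC, Matrix.one_mulVec]
  rw [key, key]
  have hξ : (ξ i : F) ≠ 0 := Units.ne_zero _
  constructor
  · simp [dotProduct, Fin.sum_univ_succ, mul_inv_cancel_left₀ hξ]
  · simp [dotProduct, Fin.sum_univ_succ]
end
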